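/- arXiv:1701.00217 — 2 statements merged into one kernel-verified Lean document; each statement's English description precedes it below -/
import Mathlib

section
/- For n ≥ 3, 0 < λ < (n-2)²/4, and a = √(1 - 4λ/(n-2)²), the function u(x) = (|x|^{a-1}/(1+|x|^{2a}))^{(n-2)/2} on ℝⁿ \ {0} is smooth, positive, and satisfies the pointwise identity Δu - (λ/|x|²)u = C·u^{(n+2)/(n-2)} for some positive constant C depending only on n, λ. -/
open Real MeasureTheory

section HardyAux

noncomputable def F1 (a β m q : ℝ) : ℝ :=
  β * q ^ (β - 1) * (1 + q ^ a) ^ (-m)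
    - m * a * q ^ (a + β - 1) * (1 + q ^ a) ^ (-(m + 1))

noncomputable def F2 (a β m q : ℝ) : ℝ :=
  β * (β - 1) * q ^ (β - 2) * (1 + q ^ a) ^ (-m)
    - m * a * (a + 2 * β - 1) * q ^ (a + β - 2) * (1 + q ^ a) ^ (-(m + 1))
    + m * (m + 1) * a ^ 2 * q ^ (2 * a + β - 2) * (1 + q ^ a) ^ (-(m + 2))

lemma hd1F (a β m q : ℝ) (hq : 0 < q) :
    HasDerivAt (fun q : ℝ => q ^ β * (1 + q ^ a) ^ (-m)) (F1 a β m q) q := by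
  unfold F1
  have hP : (0:ℝ) < 1 + q ^ a := by positivity
  have h1 : HasDerivAt (fun q : ℝ => q ^ β) (β * q ^ (β - 1)) q :=
    Real.hasDerivAt_rpow_const (Or.inl hq.ne')
  have h2 : HasDerivAt (fun q : ℝ => 1 + q ^ a) (a * q ^ (a - 1)) q := by
    simpa using (Real.hasDerivAt_rpow_const (p := a) (Or.inl hq.ne')).const_add 1
  have h3 : HasDerivAt (fun q : ℝ => (1 + q ^ a) ^ (-m))
      ((a * q ^ (a - 1)) * (-m) * (1 + q ^ a) ^ (-m - 1)) q :=
    h2.rpow_const (Or.inl hP.ne')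
  have h4 := h1.mul h3
  refine h4.congr_deriv ?_
  have e1 : q ^ (a + β - 1) = q ^ β * q ^ (a - 1) := by
    rw [show a + β - 1 = β + (a - 1) by ring, Real.rpow_add hq]
  have e2 : (1 + q ^ a) ^ (-(m + 1)) = (1 + q ^ a) ^ (-m - 1) := by
    rw [show -(m + 1) = -m - 1 by ring]
  rw [e1, e2]; ring

lemma hd2F (a β m q : ℝ) (hq : 0 < q) :
    HasDerivAt (fun q : ℝ => F1 a β m q) (F2 a β m q) q := by
  unfold F1 F2
  have hP : (0:ℝ) < 1 + q ^ a := by positivity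
  have h2 : HasDerivAt (fun q : ℝ => 1 + q ^ a) (a * q ^ (a - 1)) q := by
    simpa using (Real.hasDerivAt_rpow_const (p := a) (Or.inl hq.ne')).const_add 1
  have hpm : HasDerivAt (fun q : ℝ => (1 + q ^ a) ^ (-m))
      ((a * q ^ (a - 1)) * (-m) * (1 + q ^ a) ^ (-m - 1)) q :=
    h2.rpow_const (Or.inl hP.ne')
  have hpm1 : HasDerivAt (fun q : ℝ => (1 + q ^ a) ^ (-(m + 1)))
      ((a * q ^ (a - 1)) * (-(m + 1)) * (1 + q ^ a) ^ (-(m + 1) - 1)) q :=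
    h2.rpow_const (Or.inl hP.ne')
  have hq1 : HasDerivAt (fun q : ℝ => q ^ (β - 1)) ((β - 1) * q ^ (β - 1 - 1)) q :=
    Real.hasDerivAt_rpow_const (Or.inl hq.ne')
  have hq2 : HasDerivAt (fun q : ℝ => q ^ (a + β - 1)) ((a + β - 1) * q ^ (a + β - 1 - 1)) q :=
    Real.hasDerivAt_rpow_const (Or.inl hq.ne')
  have hA := (hq1.mul hpm).const_mul β
  have hB := (hq2.mul hpm1).const_mul (m * a)
  have h5 := hA.sub hB
  have hfun : (fun q : ℝ => β * q ^ (β - 1) * (1 + q ^ a) ^ (-m)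
        - m * a * q ^ (a + β - 1) * (1 + q ^ a) ^ (-(m + 1)))
      = fun q : ℝ => β * (q ^ (β - 1) * (1 + q ^ a) ^ (-m))
        - m * a * (q ^ (a + β - 1) * (1 + q ^ a) ^ (-(m + 1))) := by
    funext q; ring
  rw [hfun]
  refine h5.congr_deriv ?_
  have e1 : q ^ (β - 1 - 1) = q ^ (β - 2) := by congr 1; ring
  have e2 : q ^ (a + β - 1 - 1) = q ^ (a + β - 2) := by congr 1; ring
  have e3 : q ^ (β - 1) * q ^ (a - 1) = q ^ (a + β - 2) := by
    rw [← Real.rpow_add hq]; congr 1; ring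
  have e4 : q ^ (a + β - 1) * q ^ (a - 1) = q ^ (2 * a + β - 2) := by
    rw [← Real.rpow_add hq]; congr 1; ring
  have e5 : (1 + q ^ a) ^ (-m - 1) = (1 + q ^ a) ^ (-(m + 1)) := by
    congr 1; ring
  have e6 : (1 + q ^ a) ^ (-(m + 1) - 1) = (1 + q ^ a) ^ (-(m + 2)) := by
    congr 1; ring
  rw [e1, e2, e5, e6, ← e3, ← e4]
  ring

lemma keyIdF (a m β q : ℝ) (hm : 0 < m) (hq : 0 < q) (hβ : β = m * (a - 1) / 2) :
    -(4 * q * F2 a β m q + 2 * (2 * m + 2) * F1 a β m q)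
      - (m ^ 2 * (1 - a ^ 2)) / q * (q ^ β * (1 + q ^ a) ^ (-m))
      = (4 * m * (m + 1) * a ^ 2) * (q ^ β * (1 + q ^ a) ^ (-m)) ^ ((m + 2) / m) := by
  unfold F1 F2
  have hP : (0:ℝ) < 1 + q ^ a := by positivity
  have hfp : (q ^ β * (1 + q ^ a) ^ (-m)) ^ ((m + 2) / m)
      = q ^ (a + β - 1) * (1 + q ^ a) ^ (-(m + 2)) := by
    rw [Real.mul_rpow (by positivity) (by positivity), ← Real.rpow_mul hq.le,
      ← Real.rpow_mul hP.le]
    congr 1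
    · congr 1; rw [hβ]; field_simp; ring
    · congr 1; field_simp
  rw [hfp]
  have g1 : q ^ (β - 1) = q ^ (β - 2) * q := by
    rw [show β - 1 = (β - 2) + 1 by ring, Real.rpow_add hq, Real.rpow_one]
  have g2 : q ^ β = q ^ (β - 2) * q * q := by
    have h : q ^ β = q ^ ((β - 1) + 1) := by congr 1; ring
    rw [h, Real.rpow_add hq, Real.rpow_one, g1]
  have g3 : q ^ (a + β - 2) = q ^ a * q ^ (β - 2) := by
    rw [show a + β - 2 = a + (β - 2) by ring, Real.rpow_add hq]
  have g4 : q ^ (a + β - 1) = q ^ a * q ^ (β - 2) * q := by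
    rw [show a + β - 1 = a + (β - 2) + 1 by ring, Real.rpow_add hq, Real.rpow_add hq,
      Real.rpow_one]
  have g5 : q ^ (2 * a + β - 2) = q ^ a * q ^ a * q ^ (β - 2) := by
    rw [show 2 * a + β - 2 = a + a + (β - 2) by ring, Real.rpow_add hq, Real.rpow_add hq]
  have g6 : (1 + q ^ a) ^ (-m) = (1 + q ^ a) * (1 + q ^ a) * (1 + q ^ a) ^ (-(m + 2)) := by
    rw [show -m = 1 + 1 + -(m + 2) by ring, Real.rpow_add hP, Real.rpow_add hP, Real.rpow_one]
  have g7 : (1 + q ^ a) ^ (-(m + 1)) = (1 + q ^ a) * (1 + q ^ a) ^ (-(m + 2)) := by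
    rw [show -(m + 1) = 1 + -(m + 2) by ring, Real.rpow_add hP, Real.rpow_one]
  rw [g1, g2, g3, g4, g5, g6, g7, hβ]
  field_simp
  ring

end HardyAux

/-- The (geometric, i.e. nonnegative) Euclidean Laplacian: `Δf = -∑ ∂²f/∂xᵢ²`. -/
noncomputable def eucLap (n : ℕ) (f : EuclideanSpace ℝ (Fin n) → ℝ)
    (x : EuclideanSpace ℝ (Fin n)) : ℝ :=
  -∑ i : Fin n, iteratedFDeriv ℝ 2 f x ![EuclideanSpace.single i 1, EuclideanSpace.single i 1]

theorem stmt0 (n : ℕ) (hn : 3 ≤ n) (lam : ℝ) (hlam : 0 < lam)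
    (hlam2 : lam < (n - 2 : ℝ) ^ 2 / 4)
    (a : ℝ) (ha : a = Real.sqrt (1 - 4 * lam / (n - 2 : ℝ) ^ 2))
    (u : EuclideanSpace ℝ (Fin n) → ℝ)
    (hu : ∀ x : EuclideanSpace ℝ (Fin n),
      u x = (‖x‖ ^ (a - 1) / (1 + ‖x‖ ^ (2 * a))) ^ ((n - 2 : ℝ) / 2)) :
    ContDiffOn ℝ (⊤ : ℕ∞) u {(0 : EuclideanSpace ℝ (Fin n))}ᶜ ∧
    (∀ x : EuclideanSpace ℝ (Fin n), x ≠ 0 → 0 < u x) ∧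
    ∃ C : ℝ, 0 < C ∧ ∀ x : EuclideanSpace ℝ (Fin n), x ≠ 0 →
      eucLap n u x - lam / ‖x‖ ^ 2 * u x = C * u x ^ ((n + 2 : ℝ) / (n - 2 : ℝ)) := by
  have hn3 : (3:ℝ) ≤ (n:ℝ) := by exact_mod_cast hn
  have hn2 : (0:ℝ) < (n:ℝ) - 2 := by linarith
  set m : ℝ := ((n:ℝ) - 2) / 2 with hmdef
  have hm : 0 < m := by rw [hmdef]; linarith
  have hin : 0 < 1 - 4 * lam / ((n:ℝ) - 2) ^ 2 := by
    have h4 : 4 * lam < ((n:ℝ) - 2) ^ 2 := by nlinarith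
    have := (div_lt_one (by positivity : (0:ℝ) < ((n:ℝ) - 2) ^ 2)).2 h4
    linarith [this]
  have ha0 : 0 < a := by rw [ha]; exact Real.sqrt_pos.2 hin
  have ha2 : a ^ 2 = 1 - 4 * lam / ((n:ℝ) - 2) ^ 2 := by
    rw [ha, sq_sqrt hin.le]
  have hlam_eq : lam = m ^ 2 * (1 - a ^ 2) := by
    rw [ha2, hmdef]
    field_simp
    ring
  set β : ℝ := m * (a - 1) / 2 with hβdef
  have hufq : ∀ x : EuclideanSpace ℝ (Fin n), x ≠ 0 →
      u x = (‖x‖ ^ 2) ^ β * (1 + (‖x‖ ^ 2) ^ a) ^ (-m) := by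
    intro x hx
    have hr : 0 < ‖x‖ := norm_pos_iff.2 hx
    have hsq : (‖x‖ : ℝ) ^ 2 = ‖x‖ ^ ((2:ℝ)) := by
      rw [← Real.rpow_natCast ‖x‖ 2]; norm_num
    have h1 : ((‖x‖:ℝ) ^ 2) ^ a = ‖x‖ ^ (2 * a) := by
      rw [hsq, ← Real.rpow_mul hr.le]
    have h2 : ((‖x‖:ℝ) ^ 2) ^ β = (‖x‖ ^ (a - 1)) ^ m := by
      rw [hsq, ← Real.rpow_mul hr.le, ← Real.rpow_mul hr.le]
      congr 1
      rw [hβdef]; ring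
    rw [hu x, h1, h2]
    rw [Real.div_rpow (by positivity) (by positivity),
      Real.rpow_neg (by positivity), div_eq_mul_inv]
  have hpos : ∀ x : EuclideanSpace ℝ (Fin n), x ≠ 0 → 0 < u x := by
    intro x hx
    rw [hufq x hx]
    have hr : 0 < ‖x‖ := norm_pos_iff.2 hx
    have h1 : (0:ℝ) < ‖x‖ ^ 2 := by positivity
    exact mul_pos (Real.rpow_pos_of_pos h1 _) (Real.rpow_pos_of_pos (by positivity) _)
  have hsmooth : ContDiffOn ℝ (⊤ : ℕ∞) u {(0 : EuclideanSpace ℝ (Fin n))}ᶜ := by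
    intro x hx
    have hx0 : x ≠ 0 := hx
    have hr : 0 < ‖x‖ := norm_pos_iff.2 hx0
    have hq : (0:ℝ) < ‖x‖ ^ 2 := by positivity
    have hfc : ContDiffAt ℝ (⊤ : ℕ∞) (fun q : ℝ => q ^ β * (1 + q ^ a) ^ (-m)) (‖x‖ ^ 2) := by
      have h1 : ContDiffAt ℝ (⊤ : ℕ∞) (fun q : ℝ => q ^ β) (‖x‖ ^ 2) :=
        Real.contDiffAt_rpow_const_of_ne hq.ne'
      have hb : ContDiffAt ℝ (⊤ : ℕ∞) (fun q : ℝ => 1 + q ^ a) (‖x‖ ^ 2) :=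
        contDiffAt_const.add (Real.contDiffAt_rpow_const_of_ne hq.ne')
      have h2 : ContDiffAt ℝ (⊤ : ℕ∞) (fun q : ℝ => (1 + q ^ a) ^ (-m)) (‖x‖ ^ 2) := by
        have houter : ContDiffAt ℝ (⊤ : ℕ∞) (fun t : ℝ => t ^ (-m)) (1 + (‖x‖ ^ 2) ^ a) :=
          Real.contDiffAt_rpow_const_of_ne (by positivity)
        exact houter.comp (‖x‖ ^ 2) hb
      exact h1.mul h2
    have hcomp : ContDiffAt ℝ (⊤ : ℕ∞) (fun y : EuclideanSpace ℝ (Fin n) =>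
        (fun q : ℝ => q ^ β * (1 + q ^ a) ^ (-m)) (‖y‖ ^ 2)) x :=
      hfc.comp x ((contDiff_norm_sq (𝕜 := ℝ)).contDiffAt)
    have hev : u =ᶠ[nhds x] fun y : EuclideanSpace ℝ (Fin n) =>
        (‖y‖ ^ 2) ^ β * (1 + (‖y‖ ^ 2) ^ a) ^ (-m) := by
      filter_upwards [isOpen_compl_singleton.mem_nhds hx] with y hy
      exact hufq y hy
    exact (hcomp.congr_of_eventuallyEq hev).contDiffWithinAt
  refine ⟨hsmooth, hpos, 4 * m * (m + 1) * a ^ 2, by positivity, ?_⟩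
  intro x hx
  have hr : 0 < ‖x‖ := norm_pos_iff.2 hx
  have hq : (0:ℝ) < ‖x‖ ^ 2 := pow_pos hr 2
  -- the Laplacian of u at x
  have hud : ∀ y : EuclideanSpace ℝ (Fin n), y ≠ 0 →
      HasFDerivAt u ((2 * F1 a β m (‖y‖ ^ 2)) • (innerSL ℝ y)) y := by
    intro y hy
    have hqy : (0:ℝ) < ‖y‖ ^ 2 := pow_pos (norm_pos_iff.2 hy) 2
    have h1 : HasDerivAt (fun q : ℝ => q ^ β * (1 + q ^ a) ^ (-m))
        (F1 a β m (‖y‖ ^ 2)) (‖y‖ ^ 2) := hd1F a β m _ hqy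
    have hns : HasFDerivAt (fun z : EuclideanSpace ℝ (Fin n) => ‖z‖ ^ 2)
        (2 • (innerSL ℝ y)) y := (hasStrictFDerivAt_norm_sq y).hasFDerivAt
    have h2 := h1.comp_hasFDerivAt y hns
    have hev : u =ᶠ[nhds y] ((fun q : ℝ => q ^ β * (1 + q ^ a) ^ (-m))
        ∘ fun z : EuclideanSpace ℝ (Fin n) => ‖z‖ ^ 2) := by
      filter_upwards [isOpen_compl_singleton.mem_nhds hy] with z hz
      exact hufq z hz
    have h3 := h2.congr_of_eventuallyEq hev
    refine h3.congr_fderiv ?_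
    ext v
    simp [two_smul]
    ring
  have hc : HasFDerivAt (fun y : EuclideanSpace ℝ (Fin n) => 2 * F1 a β m (‖y‖ ^ 2))
      ((2 * F2 a β m (‖x‖ ^ 2)) • (2 • (innerSL ℝ x))) x := by
    have h1 : HasDerivAt (fun q : ℝ => 2 * F1 a β m q)
        (2 * F2 a β m (‖x‖ ^ 2)) (‖x‖ ^ 2) := (hd2F a β m _ hq).const_mul 2
    have hns : HasFDerivAt (fun z : EuclideanSpace ℝ (Fin n) => ‖z‖ ^ 2)
        (2 • (innerSL ℝ x)) x := (hasStrictFDerivAt_norm_sq x).hasFDerivAt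
    exact h1.comp_hasFDerivAt (f := fun z : EuclideanSpace ℝ (Fin n) => ‖z‖ ^ 2) x hns
  have hlin : HasFDerivAt (fun y : EuclideanSpace ℝ (Fin n) => innerSL ℝ y)
      (innerSL ℝ (E := EuclideanSpace ℝ (Fin n))) x := (innerSL ℝ).hasFDerivAt
  have hΦ := hc.smul hlin
  have hev2 : (fun y : EuclideanSpace ℝ (Fin n) => (2 * F1 a β m (‖y‖ ^ 2)) • (innerSL ℝ y))
      =ᶠ[nhds x] fderiv ℝ u := by
    filter_upwards [isOpen_compl_singleton.mem_nhds hx] with y hy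
    exact ((hud y hy).fderiv).symm
  have hD2 := hev2.fderiv_eq.symm.trans hΦ.fderiv
  have hiter : ∀ i : Fin n,
      iteratedFDeriv ℝ 2 u x ![EuclideanSpace.single i 1, EuclideanSpace.single i 1]
        = 2 * F1 a β m (‖x‖ ^ 2) + 4 * F2 a β m (‖x‖ ^ 2) * (x i) ^ 2 := by
    intro i
    rw [iteratedFDeriv_two_apply, hD2]
    simp [ContinuousLinearMap.add_apply, ContinuousLinearMap.smul_apply,
      ContinuousLinearMap.smulRight_apply, innerSL_apply_apply, two_smul,
      EuclideanSpace.inner_single_left, EuclideanSpace.inner_single_right,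
      EuclideanSpace.single_apply]
    rw [innerSL_apply_apply, EuclideanSpace.inner_single_left]
    simp
    ring
  have hsum : ∑ i : Fin n, (x i) ^ 2 = ‖x‖ ^ 2 := by
    rw [EuclideanSpace.norm_eq, Real.sq_sqrt (by positivity)]
    simp [sq_abs]
  have hlap : eucLap n u x
      = -(4 * F2 a β m (‖x‖ ^ 2) * (‖x‖ ^ 2) + 2 * n * F1 a β m (‖x‖ ^ 2)) := by
    rw [eucLap]
    rw [Finset.sum_congr rfl fun i _ => hiter i]
    rw [Finset.sum_add_distrib, Finset.sum_const, Finset.card_univ, Fintype.card_fin,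
      ← Finset.mul_sum, hsum]
    ring
  -- final combination
  have hkey := keyIdF a m β (‖x‖ ^ 2) hm hq hβdef
  have hp : ((n:ℝ) + 2) / ((n:ℝ) - 2) = (m + 2) / m := by
    rw [hmdef]
    field_simp
    ring
  have hnm : (2 * m + 2 : ℝ) = (n:ℝ) := by rw [hmdef]; ring
  rw [hlap, hufq x hx, hp, hlam_eq, ← hnm]
  linarith [hkey]
end

section
/- Let n ≥ 3 and let v ∈ D^{1,2}(ℝⁿ) be a nontrivial weak solution of Δv - (h/|x|²)v = f₀ |v|^{2*-2} v, where 0 < h < 1/K(n,2,-2)², f₀ > 0, and 2* = 2n/(n-2). Assume the Hardy inequality ∫ v²/|x|² ≤ K(n,2,-2)² ∫|∇v|² and the Sobolev inequality ‖v‖_{2*}² ≤ K(n,2)² ∫|∇v|². Then (1/n)∫_{ℝⁿ}(|∇v|² - h v²/|x|²) dx ≥ (1 - h·K(n,2,-2)²)^{n/2} / (n f₀^{(n-2)/2} K(n,2)ⁿ). -/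
open Real MeasureTheory

/-!
Write `A = ∫ |∇v|²`, `S = ∫ |v|^{2*}` and `c = 1 - h K'²`. Hardy's inequality turns the tested
equation `A - h ∫ v²/|x|² = f₀ S` into `c A ≤ f₀ S`, and Sobolev's into `S^{1 - 2/n} ≤ K² A`.
Together `S^{1 - 2/n} ≤ (K² f₀ / c) S`; since `S > 0` this is the lower bound
`S ≥ (c / (K² f₀))^{n/2}`, and the energy `(1/n) f₀ S` inherits it.
-/

lemma rpow_inv_inv_le_of_rpow_one_sub_le {S b q : ℝ} (hS : 0 < S) (hb : 0 < b) (hq : 0 < q)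
    (h : S ^ (1 - q) ≤ b * S) : b⁻¹ ^ q⁻¹ ≤ S := by
  have hSq : 0 < S ^ q := rpow_pos_of_pos hS q
  have hb_le : b⁻¹ ≤ S ^ q := by
    rw [rpow_sub hS, rpow_one, div_le_iff₀ hSq] at h
    rw [inv_le_iff_one_le_mul₀ hb]
    nlinarith
  calc b⁻¹ ^ q⁻¹ ≤ (S ^ q) ^ q⁻¹ := rpow_le_rpow (by positivity) hb_le (by positivity)
    _ = S := rpow_rpow_inv hS.le hq.ne'

lemma rpow_half_le_of_sobolev {n : ℕ} (hn : 0 < n) {A S c f K : ℝ} (hS : 0 < S) (hc : 0 < c)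
    (hf : 0 < f) (hK : 0 < K) (hcoer : c * A ≤ f * S)
    (hSob : S ^ (((n : ℝ) - 2) / n) ≤ K ^ 2 * A) :
    (c / (K ^ 2 * f)) ^ ((n : ℝ) / 2) ≤ S := by
  have hn' : (0 : ℝ) < n := by exact_mod_cast hn
  have hexp : ((n : ℝ) - 2) / n = 1 - 2 / n := by field_simp
  have hS_le : S ^ (1 - 2 / (n : ℝ)) ≤ (K ^ 2 * f / c) * S := by
    rw [← hexp, div_mul_eq_mul_div, le_div_iff₀ hc]
    nlinarith
  simpa [inv_div] using rpow_inv_inv_le_of_rpow_one_sub_le hS (by positivity) (by positivity) hS_le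

lemma mul_div_rpow_half_eq {n : ℕ} {c f K : ℝ} (hc : 0 ≤ c) (hf : 0 < f) (hK : 0 < K) :
    f * (c / (K ^ 2 * f)) ^ ((n : ℝ) / 2) = c ^ ((n : ℝ) / 2) / (f ^ (((n : ℝ) - 2) / 2) * K ^ n) := by
  have hK2 : (K ^ 2) ^ ((n : ℝ) / 2) = K ^ n := by
    rw [← rpow_natCast K 2, ← rpow_mul hK.le, ← rpow_natCast K n]
    congr 1; push_cast; ring
  have hf2 : f ^ ((n : ℝ) / 2) = f * f ^ (((n : ℝ) - 2) / 2) := by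
    rw [show (n : ℝ) / 2 = 1 + ((n : ℝ) - 2) / 2 by ring, rpow_add hf, rpow_one]
  rw [div_rpow hc (by positivity), mul_rpow (by positivity) hf.le, hK2, hf2]
  field_simp

theorem stmt4_general (n : ℕ) (hn : 3 ≤ n) (h f₀ K K' : ℝ)
    (hK : 0 < K)
    (hh : 0 < h) (hh2 : h < 1 / K' ^ 2) (hf₀ : 0 < f₀)
    (v : EuclideanSpace ℝ (Fin n) → ℝ)
    (hnontriv : (∫ x : EuclideanSpace ℝ (Fin n), |v x| ^ ((2 * n : ℝ) / (n - 2))) ≠ 0)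
    -- `v` is a weak solution of `Δv - (h/|x|²) v = f₀ |v|^{2*-2} v`; tested against `v` itself
    -- (by density of test functions in `D^{1,2}`) this gives:
    (hweak : (∫ x : EuclideanSpace ℝ (Fin n), ‖fderiv ℝ v x‖ ^ 2)
        - h * ∫ x : EuclideanSpace ℝ (Fin n), v x ^ 2 / ‖x‖ ^ 2
        = f₀ * ∫ x : EuclideanSpace ℝ (Fin n), |v x| ^ ((2 * n : ℝ) / (n - 2)))
    -- Hardy inequality for `v`:
    (hHardy : (∫ x : EuclideanSpace ℝ (Fin n), v x ^ 2 / ‖x‖ ^ 2)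
        ≤ K' ^ 2 * ∫ x : EuclideanSpace ℝ (Fin n), ‖fderiv ℝ v x‖ ^ 2)
    -- Sobolev inequality for `v` (note `‖v‖_{2*}² = (∫|v|^{2*})^{(n-2)/n}`):
    (hSobolev : (∫ x : EuclideanSpace ℝ (Fin n), |v x| ^ ((2 * n : ℝ) / (n - 2))) ^ ((n - 2 : ℝ) / n)
        ≤ K ^ 2 * ∫ x : EuclideanSpace ℝ (Fin n), ‖fderiv ℝ v x‖ ^ 2) :
    (1 / n : ℝ) * ((∫ x : EuclideanSpace ℝ (Fin n), ‖fderiv ℝ v x‖ ^ 2)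
        - h * ∫ x : EuclideanSpace ℝ (Fin n), v x ^ 2 / ‖x‖ ^ 2)
      ≥ (1 - h * K' ^ 2) ^ ((n : ℝ) / 2) / (n * f₀ ^ ((n - 2 : ℝ) / 2) * K ^ n) := by
  set A := ∫ x : EuclideanSpace ℝ (Fin n), ‖fderiv ℝ v x‖ ^ 2
  set S := ∫ x : EuclideanSpace ℝ (Fin n), |v x| ^ ((2 * n : ℝ) / (n - 2))
  have hS : 0 < S :=
    (integral_nonneg fun x => rpow_nonneg (abs_nonneg _) _).lt_of_ne' hnontriv
  have hc : 0 < 1 - h * K' ^ 2 := by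
    have hK'2 : 0 < K' ^ 2 := one_div_pos.mp (hh.trans hh2)
    linarith [(lt_div_iff₀ hK'2).mp hh2]
  have hcoer : (1 - h * K' ^ 2) * A ≤ f₀ * S := by
    rw [← hweak]
    nlinarith
  have hS_ge := rpow_half_le_of_sobolev (by omega) hS hc hf₀ hK hcoer hSobolev
  rw [hweak, ge_iff_le]
  calc (1 - h * K' ^ 2) ^ ((n : ℝ) / 2) / (n * f₀ ^ ((n - 2 : ℝ) / 2) * K ^ n)
      = 1 / n * (f₀ * ((1 - h * K' ^ 2) / (K ^ 2 * f₀)) ^ ((n : ℝ) / 2)) := by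
        rw [mul_div_rpow_half_eq hc.le hf₀ hK, mul_assoc, ← div_div, one_div_mul_eq_div, div_right_comm]
    _ ≤ 1 / n * (f₀ * S) := by gcongr

theorem stmt4 (n : ℕ) (hn : 3 ≤ n) (h f₀ K K' : ℝ)
    (hK : 0 < K) (hK' : K' = 2 / (n - 2 : ℝ))
    (hh : 0 < h) (hh2 : h < 1 / K' ^ 2) (hf₀ : 0 < f₀)
    (v : EuclideanSpace ℝ (Fin n) → ℝ)
    (hnontriv : (∫ x : EuclideanSpace ℝ (Fin n), |v x| ^ ((2 * n : ℝ) / (n - 2))) ≠ 0)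
    -- `v` is a weak solution of `Δv - (h/|x|²) v = f₀ |v|^{2*-2} v`; tested against `v` itself
    -- (by density of test functions in `D^{1,2}`) this gives:
    (hweak : (∫ x : EuclideanSpace ℝ (Fin n), ‖fderiv ℝ v x‖ ^ 2)
        - h * ∫ x : EuclideanSpace ℝ (Fin n), v x ^ 2 / ‖x‖ ^ 2
        = f₀ * ∫ x : EuclideanSpace ℝ (Fin n), |v x| ^ ((2 * n : ℝ) / (n - 2)))
    -- Hardy inequality for `v`:
    (hHardy : (∫ x : EuclideanSpace ℝ (Fin n), v x ^ 2 / ‖x‖ ^ 2)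
        ≤ K' ^ 2 * ∫ x : EuclideanSpace ℝ (Fin n), ‖fderiv ℝ v x‖ ^ 2)
    -- Sobolev inequality for `v` (note `‖v‖_{2*}² = (∫|v|^{2*})^{(n-2)/n}`):
    (hSobolev : (∫ x : EuclideanSpace ℝ (Fin n), |v x| ^ ((2 * n : ℝ) / (n - 2))) ^ ((n - 2 : ℝ) / n)
        ≤ K ^ 2 * ∫ x : EuclideanSpace ℝ (Fin n), ‖fderiv ℝ v x‖ ^ 2) :
    (1 / n : ℝ) * ((∫ x : EuclideanSpace ℝ (Fin n), ‖fderiv ℝ v x‖ ^ 2)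
        - h * ∫ x : EuclideanSpace ℝ (Fin n), v x ^ 2 / ‖x‖ ^ 2)
      ≥ (1 - h * K' ^ 2) ^ ((n : ℝ) / 2) / (n * f₀ ^ ((n - 2 : ℝ) / 2) * K ^ n) :=
  stmt4_general n hn h f₀ K K' hK hh hh2 hf₀ v hnontriv hweak hHardy hSobolev
end
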